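/- arXiv:cs/0502074 — 4 statements merged into one kernel-verified Lean document; each statement's English description precedes it below -/
import Mathlib

section
/- There exists a predictor φ (not necessarily computable) such that for every labelling function η and all ε, δ ∈ (0,1), the sample complexity satisfies N(φ, η, δ, ε) ≤ max( l(η) · (8/ε) · log₂(13/ε), (4/ε) · log₂(2/δ) ). -/
open scoped Classical

noncomputable section

/-- The finite set of all binary strings of length `t` (`X_t = {0,1}^t`). -/
def strings : ℕ → Finset (List Bool)
  | 0 => {[]}
  | t + 1 => ((strings t).image (List.cons false)) ∪ ((strings t).image (List.cons true))

/-- A code `c` (in the fixed Gödel enumeration of partial recursive functions given by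
`Nat.Partrec.Code`) computes the partial function `f` from binary strings to `Bool`. -/
def Computes (c : Nat.Partrec.Code) (f : List Bool →. Bool) : Prop :=
  ∀ x : List Bool, c.eval (Encodable.encode x) = (f x).map (fun b => (Encodable.encode b : ℕ))

/-- A labelling function: a partial recursive function from binary strings to `{0,1}`
whose domain is exactly `X_t` for some `t`. -/
structure LabellingFunction where
  f : List Bool →. Bool
  partrec : Partrec f
  t : ℕ
  dom : ∀ x : List Bool, (f x).Dom ↔ x.length = t

/-- The value of a labelling function (defaulting to `false` outside its domain). -/
def LabellingFunction.eval (η : LabellingFunction) (x : List Bool) : Bool :=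
  if h : (η.f x).Dom then (η.f x).get h else false

/-- The length `l(η)`: the number of binary digits of the minimal index of `η`
in the fixed enumeration of partial recursive functions. -/
def ell (η : LabellingFunction) : ℕ :=
  Nat.size (sInf {n : ℕ | Computes (Denumerable.ofNat Nat.Partrec.Code n) η.f})

/-- A predictor: a family of total functions `φ_n(x₁,y₁,…,xₙ,yₙ,x)`
(the family index `n` being the length of the list of labelled examples). -/
def Predictor : Type := List (List Bool × Bool) → List Bool → Bool

/-- A probability distribution on `X_t`. -/
structure FinDist (t : ℕ) where
  p : List Bool → ℝ
  nonneg : ∀ x, 0 ≤ p x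
  sum_one : ∑ x ∈ strings t, p x = 1

/-- Probability of a set (predicate) of strings under a distribution on `X_t`. -/
def FinDist.pr {t : ℕ} (P : FinDist t) (S : List Bool → Prop) : ℝ :=
  ∑ x ∈ (strings t).filter S, P.p x

/-- `δ_n(φ,η,ε)`: the supremum over all distributions `P` on `X_{t(η)}` of the `P^n`-probability
(i.i.d. sampling) that the `P`-probability of error of `φ` exceeds `ε`. -/
def delta (φ : Predictor) (η : LabellingFunction) (ε : ℝ) (n : ℕ) : ℝ :=
  sSup { r : ℝ | ∃ P : FinDist η.t,
    r = ∑ xs ∈ (Fintype.piFinset fun _ : Fin n => strings η.t).filter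
          (fun xs : Fin n → List Bool =>
            ε < P.pr fun x => φ (List.ofFn fun i => (xs i, η.eval (xs i))) x ≠ η.eval x),
        ∏ i, P.p (xs i) }

/-- The sample complexity `N(φ,η,δ,ε) = min{n : δ_n(φ,η,ε) ≤ δ}` (with `min ∅ = ∞`). -/
def sampleComplexity (φ : Predictor) (η : LabellingFunction) (δ ε : ℝ) : ℕ∞ :=
  sInf {N : ℕ∞ | ∃ n : ℕ, (n : ℕ∞) = N ∧ delta φ η ε n ≤ δ}

/-- hypothesis function determined by code `m` -/
def hfun (m : ℕ) (x : List Bool) : Bool :=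
  if h : ((Denumerable.ofNat Nat.Partrec.Code m).eval (Encodable.encode x)).Dom
  then decide ((((Denumerable.ofNat Nat.Partrec.Code m).eval (Encodable.encode x)).get h) = 1)
  else false

def candSet (s : List (List Bool × Bool)) (t : ℕ) : Set ℕ :=
  {m | ∃ η' : LabellingFunction, η'.t = t ∧ (∀ p ∈ s, η'.eval p.1 = p.2) ∧
        Computes (Denumerable.ofNat Nat.Partrec.Code m) η'.f}

def phi : Predictor := fun s x => hfun (sInf (candSet s x.length)) x

lemma length_of_mem_strings : ∀ t (x : List Bool), x ∈ strings t → x.length = t := by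
  intro t
  induction t with
  | zero => intro x hx; simp [strings] at hx; simp [hx]
  | succ t ih =>
    intro x hx
    simp [strings] at hx
    rcases hx with ⟨y, hy, rfl⟩ | ⟨y, hy, rfl⟩ <;> simp [ih y hy]

lemma hfun_eq (m : ℕ) (η : LabellingFunction) (h : Computes (Denumerable.ofNat Nat.Partrec.Code m) η.f)
    (x : List Bool) (hx : x.length = η.t) : hfun m x = η.eval x := by
  have hd : (η.f x).Dom := (η.dom x).2 hx
  have := h x
  rw [hfun, LabellingFunction.eval, dif_pos hd]
  have hdom : ((Denumerable.ofNat Nat.Partrec.Code m).eval (Encodable.encode x)).Dom := by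
    rw [this]; exact Part.dom_iff_mem.2 ⟨_, Part.mem_map _ (Part.get_mem hd)⟩
  rw [dif_pos hdom]
  have hget : ((Denumerable.ofNat Nat.Partrec.Code m).eval (Encodable.encode x)).get hdom
      = Encodable.encode ((η.f x).get hd) := by
    apply Part.get_eq_of_mem
    rw [this]
    exact Part.mem_map _ (Part.get_mem hd)
  rw [hget]
  cases (η.f x).get hd <;> simp [Encodable.encode] <;> decide

lemma exists_index (η : LabellingFunction) :
    ∃ n : ℕ, Computes (Denumerable.ofNat Nat.Partrec.Code n) η.f := by
  obtain ⟨c, hc⟩ := Nat.Partrec.Code.exists_code.1 η.partrec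
  refine ⟨Encodable.encode c, ?_⟩
  intro x
  rw [Denumerable.ofNat_encode, hc]
  simp [Encodable.encodek]

lemma mysum_biUnion_le {α : Type*} [DecidableEq α] (s : Finset ℕ) (f : ℕ → Finset α) (g : α → ℝ)
    (hg : ∀ x, 0 ≤ g x) :
    ∑ x ∈ s.biUnion f, g x ≤ ∑ m ∈ s, ∑ x ∈ f m, g x := by
  induction s using Finset.induction with
  | empty => simp
  | @insert a s h ih =>
    rw [Finset.biUnion_insert, Finset.sum_insert h]
    have h1 : ∑ x ∈ f a ∪ s.biUnion f, g x ≤ ∑ x ∈ f a, g x + ∑ x ∈ s.biUnion f, g x := by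
      have := Finset.sum_union_inter (s₁ := f a) (s₂ := s.biUnion f) (f := g)
      have h0 : 0 ≤ ∑ x ∈ f a ∩ s.biUnion f, g x := Finset.sum_nonneg fun x _ => hg x
      linarith
    linarith

lemma delta_phi_le (η : LabellingFunction) (ε : ℝ) (hε : 0 < ε) (hε1 : ε < 1) (n : ℕ) :
    delta phi η ε n ≤ (2 : ℝ) ^ ell η * (1 - ε) ^ n := by
  have h1ε : (0:ℝ) ≤ 1 - ε := by linarith
  have hR : (0:ℝ) ≤ 2 ^ ell η * (1 - ε) ^ n := by positivity
  apply Real.sSup_le _ hR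
  rintro r ⟨P, rfl⟩
  have hne : {m : ℕ | Computes (Denumerable.ofNat Nat.Partrec.Code m) η.f}.Nonempty :=
    exists_index η
  set nstar := sInf {m : ℕ | Computes (Denumerable.ofNat Nat.Partrec.Code m) η.f} with hnstar
  have hcomp : Computes (Denumerable.ofNat Nat.Partrec.Code nstar) η.f := Nat.sInf_mem hne
  have hlt : nstar < 2 ^ ell η := Nat.lt_size_self nstar
  set Bm : ℕ → Finset (Fin n → List Bool) := fun m =>
    (Fintype.piFinset fun _ : Fin n => strings η.t).filter
      (fun xs => (∀ i, hfun m (xs i) = η.eval (xs i)) ∧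
        ε < P.pr fun x => hfun m x ≠ η.eval x) with hBm
  have hsub : (Fintype.piFinset fun _ : Fin n => strings η.t).filter
      (fun xs : Fin n → List Bool =>
        ε < P.pr fun x => phi (List.ofFn fun i => (xs i, η.eval (xs i))) x ≠ η.eval x)
      ⊆ (Finset.range (2 ^ ell η)).biUnion Bm := by
    intro xs hxs
    rw [Finset.mem_filter] at hxs
    obtain ⟨hpi, hbad⟩ := hxs
    have hlen : ∀ i, (xs i).length = η.t := fun i =>
      length_of_mem_strings η.t _ (Fintype.mem_piFinset.1 hpi i)
    set s := List.ofFn fun i => (xs i, η.eval (xs i)) with hs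
    have hcand : nstar ∈ candSet s η.t := by
      refine ⟨η, rfl, ?_, hcomp⟩
      intro p hp
      rw [hs, List.mem_ofFn] at hp
      obtain ⟨i, rfl⟩ := hp
      rfl
    have hm0 : sInf (candSet s η.t) ∈ candSet s η.t := Nat.sInf_mem ⟨_, hcand⟩
    set m0 := sInf (candSet s η.t) with hm0def
    obtain ⟨η', hη't, hcons, hcomp'⟩ := hm0
    have hphi : ∀ x ∈ strings η.t, phi s x = hfun m0 x := by
      intro x hx
      show hfun (sInf (candSet s x.length)) x = hfun m0 x
      rw [length_of_mem_strings η.t x hx]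
    have hkey : ∀ i, hfun m0 (xs i) = η.eval (xs i) := by
      intro i
      rw [hfun_eq m0 η' hcomp' _ (by rw [hη't]; exact hlen i)]
      exact hcons (xs i, η.eval (xs i)) (by rw [hs, List.mem_ofFn]; exact ⟨i, rfl⟩)
    rw [Finset.mem_biUnion]
    refine ⟨m0, Finset.mem_range.2 (lt_of_le_of_lt (Nat.sInf_le hcand) hlt), ?_⟩
    rw [hBm]
    simp only [Finset.mem_filter]
    refine ⟨hpi, hkey, ?_⟩
    have hpr : P.pr (fun x => phi s x ≠ η.eval x) = P.pr (fun x => hfun m0 x ≠ η.eval x) := by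
      unfold FinDist.pr
      congr 1
      ext x
      simp only [Finset.mem_filter, and_congr_right_iff]
      intro hx
      rw [hphi x hx]
    rw [← hpr]
    exact hbad
  have hBmle : ∀ m, ∑ xs ∈ Bm m, ∏ i, P.p (xs i) ≤ (1 - ε) ^ n := by
    intro m
    by_cases hm : ε < P.pr fun x => hfun m x ≠ η.eval x
    · have hsub2 : Bm m ⊆ Fintype.piFinset
          (fun _ : Fin n => (strings η.t).filter (fun x => hfun m x = η.eval x)) := by
        intro xs hxs
        rw [hBm, Finset.mem_filter] at hxs
        obtain ⟨hpi, hall, _⟩ := hxs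
        rw [Fintype.mem_piFinset]
        intro i
        exact Finset.mem_filter.2 ⟨Fintype.mem_piFinset.1 hpi i, hall i⟩
      have hq0 : 0 ≤ ∑ x ∈ (strings η.t).filter (fun x => hfun m x = η.eval x), P.p x :=
        Finset.sum_nonneg fun x _ => P.nonneg x
      have hq1 : ∑ x ∈ (strings η.t).filter (fun x => hfun m x = η.eval x), P.p x ≤ 1 - ε := by
        have := Finset.sum_filter_add_sum_filter_not (strings η.t)
          (fun x => hfun m x = η.eval x) P.p
        have hprne : P.pr (fun x => hfun m x ≠ η.eval x)
            = ∑ x ∈ (strings η.t).filter (fun x => ¬ (hfun m x = η.eval x)), P.p x := by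
          unfold FinDist.pr
          congr 1
          ext x
          simp only [Finset.mem_filter, ne_eq]
        rw [P.sum_one] at this
        rw [hprne] at hm
        linarith
      calc ∑ xs ∈ Bm m, ∏ i, P.p (xs i)
          ≤ ∑ xs ∈ Fintype.piFinset
              (fun _ : Fin n => (strings η.t).filter (fun x => hfun m x = η.eval x)),
              ∏ i, P.p (xs i) :=
            Finset.sum_le_sum_of_subset_of_nonneg hsub2
              (fun xs _ _ => Finset.prod_nonneg fun i _ => P.nonneg _)
        _ = ∏ _i : Fin n, ∑ x ∈ (strings η.t).filter (fun x => hfun m x = η.eval x), P.p x :=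
            (Finset.prod_univ_sum _ _).symm
        _ = (∑ x ∈ (strings η.t).filter (fun x => hfun m x = η.eval x), P.p x) ^ n := by
            rw [Finset.prod_const, Finset.card_univ, Fintype.card_fin]
        _ ≤ (1 - ε) ^ n := pow_le_pow_left₀ hq0 hq1 n
    · have : Bm m = ∅ := by
        rw [hBm]
        apply Finset.filter_false_of_mem
        intro xs _
        rintro ⟨-, h2⟩
        exact hm h2
      rw [this, Finset.sum_empty]
      positivity
  calc ∑ xs ∈ (Fintype.piFinset fun _ : Fin n => strings η.t).filter
          (fun xs : Fin n → List Bool =>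
            ε < P.pr fun x => phi (List.ofFn fun i => (xs i, η.eval (xs i))) x ≠ η.eval x),
        ∏ i, P.p (xs i)
      ≤ ∑ xs ∈ (Finset.range (2 ^ ell η)).biUnion Bm, ∏ i, P.p (xs i) :=
        Finset.sum_le_sum_of_subset_of_nonneg hsub
          (fun xs _ _ => Finset.prod_nonneg fun i _ => P.nonneg _)
    _ ≤ ∑ m ∈ Finset.range (2 ^ ell η), ∑ xs ∈ Bm m, ∏ i, P.p (xs i) :=
        mysum_biUnion_le _ _ _ (fun xs => Finset.prod_nonneg fun i _ => P.nonneg _)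
    _ ≤ ∑ _m ∈ Finset.range (2 ^ ell η), (1 - ε) ^ n :=
        Finset.sum_le_sum fun m _ => hBmle m
    _ = (2 : ℝ) ^ ell η * (1 - ε) ^ n := by
        rw [Finset.sum_const, Finset.card_range, nsmul_eq_mul]
        push_cast
        ring

lemma numeric_bound (l : ℕ) (ε δ : ℝ) (hε : 0 < ε) (hε1 : ε < 1) (hδ : 0 < δ) (hδ1 : δ < 1) :
    (l : ℝ) * Real.log 2 - Real.log δ ≤
      (⌊max ((l : ℝ) * (8 / ε) * Real.logb 2 (13 / ε))
            ((4 / ε) * Real.logb 2 (2 / δ))⌋₊ : ℝ) * ε := by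
  set A := (l : ℝ) * (8 / ε) * Real.logb 2 (13 / ε) with hA
  set B := (4 / ε) * Real.logb 2 (2 / δ) with hB
  set L := Real.log 2 with hL
  set D := -Real.log δ with hD
  have hLpos : 0 < L := Real.log_pos (by norm_num)
  have hL1 : L < 1 := lt_trans Real.log_two_lt_d9 (by norm_num)
  have hDpos : 0 < D := by
    have := Real.log_neg hδ hδ1
    simp only [hD]; linarith
  have hlogb13 : (3:ℝ) ≤ Real.logb 2 (13 / ε) := by
    have h8 : (8:ℝ) ≤ 13 / ε := by
      rw [le_div_iff₀ hε]; nlinarith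
    have : Real.logb 2 8 ≤ Real.logb 2 (13 / ε) :=
      (Real.logb_le_logb (by norm_num) (by norm_num) (by positivity)).2 h8
    have h83 : Real.logb 2 8 = 3 := by
      rw [show (8:ℝ) = 2^(3:ℕ) by norm_num, Real.logb_pow,
        Real.logb_self_eq_one (by norm_num : (1:ℝ) < 2)]
      norm_num
    linarith
  have hAe : (24:ℝ) * l ≤ A * ε := by
    rw [hA]
    have : (l : ℝ) * (8 / ε) * Real.logb 2 (13 / ε) * ε
        = 8 * l * Real.logb 2 (13 / ε) * (ε / ε) := by ring
    rw [this, div_self (ne_of_gt hε), mul_one]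
    nlinarith [Nat.cast_nonneg (α := ℝ) l]
  have hBe : 4 + 4 * D ≤ B * ε := by
    rw [hB]
    have h1 : (4 / ε) * Real.logb 2 (2 / δ) * ε = 4 * Real.logb 2 (2 / δ) * (ε / ε) := by ring
    rw [h1, div_self (ne_of_gt hε), mul_one]
    have h2 : Real.logb 2 (2 / δ) = 1 + D / L := by
      rw [Real.logb, Real.log_div (by norm_num) (ne_of_gt hδ)]
      field_simp [hD, hL]
      ring
    rw [h2]
    have h3 : D ≤ D / L := by
      rw [le_div_iff₀ hLpos]; nlinarith
    linarith
  have hmax : (A + B) / 2 ≤ max A B := by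
    rcases le_total A B with h | h
    · rw [max_eq_right h]; linarith
    · rw [max_eq_left h]; linarith
  have hfloor : max A B - 1 < (⌊max A B⌋₊ : ℝ) := Nat.sub_one_lt_floor _
  have hfε : (max A B - 1) * ε ≤ (⌊max A B⌋₊ : ℝ) * ε :=
    mul_le_mul_of_nonneg_right (le_of_lt hfloor) (le_of_lt hε)
  have hlL : (l:ℝ) * L ≤ 12 * l := by nlinarith [Nat.cast_nonneg (α := ℝ) l]
  nlinarith [hfε, hmax, hAe, hBe]

/-- There exists a predictor `φ` such that for every labelling function `η` and all
`ε, δ ∈ (0,1)`, `N(φ,η,δ,ε) ≤ max( l(η)·(8/ε)·log₂(13/ε), (4/ε)·log₂(2/δ) )`. -/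
theorem exists_predictor_sample_complexity_bound :
    ∃ φ : Predictor, ∀ η : LabellingFunction, ∀ ε δ : ℝ,
      0 < ε → ε < 1 → 0 < δ → δ < 1 →
      sampleComplexity φ η δ ε ≤
        (⌊max ((ell η : ℝ) * (8 / ε) * Real.logb 2 (13 / ε))
              ((4 / ε) * Real.logb 2 (2 / δ))⌋₊ : ℕ∞) := by
  refine ⟨phi, fun η ε δ hε hε1 hδ hδ1 => ?_⟩
  set n := ⌊max ((ell η : ℝ) * (8 / ε) * Real.logb 2 (13 / ε))
      ((4 / ε) * Real.logb 2 (2 / δ))⌋₊ with hn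
  apply sInf_le
  refine ⟨n, rfl, ?_⟩
  have h1 := delta_phi_le η ε hε hε1 n
  have h2 := numeric_bound (ell η) ε δ hε hε1 hδ hδ1
  rw [← hn] at h2
  have h1ε : (0:ℝ) ≤ 1 - ε := by linarith
  have e1 : (1 - ε) ^ n ≤ Real.exp (-((n : ℝ) * ε)) := by
    have hee : (1 - ε) ≤ Real.exp (-ε) := by
      have := Real.add_one_le_exp (-ε); linarith
    calc (1 - ε) ^ n ≤ (Real.exp (-ε)) ^ n := pow_le_pow_left₀ h1ε hee n
      _ = Real.exp (-((n : ℝ) * ε)) := by rw [← Real.exp_nat_mul]; ring_nf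
  have e2 : (2:ℝ) ^ (ell η) = Real.exp ((ell η : ℝ) * Real.log 2) := by
    rw [Real.exp_nat_mul, Real.exp_log (by norm_num : (0:ℝ) < 2)]
  have e3 : (2:ℝ) ^ (ell η) * (1 - ε) ^ n ≤ δ := by
    calc (2:ℝ) ^ (ell η) * (1 - ε) ^ n
        ≤ Real.exp ((ell η : ℝ) * Real.log 2) * Real.exp (-((n : ℝ) * ε)) := by
          rw [← e2]
          exact mul_le_mul_of_nonneg_left e1 (by positivity)
      _ = Real.exp ((ell η : ℝ) * Real.log 2 - (n : ℝ) * ε) := by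
          rw [← Real.exp_add]; ring_nf
      _ ≤ Real.exp (Real.log δ) := Real.exp_le_exp.2 (by linarith)
      _ = δ := Real.exp_log hδ
  linarith
end
end

section
/- For every data compressor ψ and every total recursive function γ : ℕ → ℕ that is monotone nondecreasing and tends to infinity, there exists a binary string x such that C(x) ≤ γ(|x|) and |ψ(x)| ≥ |x|. -/
noncomputable section

/-- Kolmogorov complexity of a binary string `x` with respect to a machine (partial
function) `ζ`: the minimal length of a program `p` with `ζ(p) = x` (`min ∅ = ∞`). -/
def Cplx (ζ : List Bool →. List Bool) (x : List Bool) : ℕ∞ :=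
  sInf {n : ℕ∞ | ∃ p : List Bool, ζ p = Part.some x ∧ (p.length : ℕ∞) = n}

/-- `ζ₀` is an optimal machine: it is partial recursive and for every partial recursive
machine `ζ'` there is a constant `c` with `C_{ζ₀}(x) ≤ C_{ζ'}(x) + c` for all `x`. -/
def OptimalMachine (ζ₀ : List Bool →. List Bool) : Prop :=
  Partrec ζ₀ ∧ ∀ ζ' : List Bool →. List Bool, Partrec ζ' →
    ∃ c : ℕ, ∀ x : List Bool, Cplx ζ₀ x ≤ Cplx ζ' x + (c : ℕ∞)

/-- The binary string identified with the natural number `n` via the length-lexicographic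
ordering (`0 ↦ ε`, `1 ↦ 0`, `2 ↦ 1`, `3 ↦ 00`, …): the binary digits of `n+1`
(most significant first) with the leading `1` removed. -/
def natToStr (n : ℕ) : List Bool := ((n + 1).bits.reverse).tail

/-- The natural number identified with the binary string `x` via the length-lexicographic
ordering (the inverse of `natToStr`). -/
def strToNat (x : List Bool) : ℕ := (x.foldl (fun a b => 2 * a + cond b 1 0) 1) - 1

/-! An injection cannot shorten all long strings: choose `N` beyond `M` and beyond every
`|ψ x|` with `|x| < M`; then `ψ` would map the strings of length `≤ N + 1` injectively into
the strictly smaller finite set of strings of length `≤ N`.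

For the complexity bound, a machine that on input `p` outputs the first uncompressed `x`
with `γ(|x|) ≥ 2|p|` has, by optimality, a constant `c` with `C(x) ≤ |p| + c`; on the
program `p = 1^c` this gives `C(x) ≤ 2c ≤ γ(|x|)`. -/

theorem Function.Injective.exists_le_length_le_length_apply {α : Type*} [Finite α] [Nonempty α]
    {ψ : List α → List α} (hψ : Function.Injective ψ) (M : ℕ) :
    ∃ x : List α, M ≤ x.length ∧ x.length ≤ (ψ x).length := by
  by_contra! hshort
  obtain ⟨B, hB⟩ := ((List.finite_length_le α M).image fun x => (ψ x).length).bddAbove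
  set N := max M B
  have hmaps :
      ∀ x ∈ {x : List α | x.length ≤ N + 1}, ψ x ∈ {x : List α | x.length ≤ N} := by
    intro x (hx : x.length ≤ N + 1)
    show (ψ x).length ≤ N
    by_cases hM : M ≤ x.length
    · have := hshort x hM
      omega
    · exact (hB ⟨x, show x.length ≤ M by omega, rfl⟩).trans (le_max_right M B)
  have hsub : {x : List α | x.length ≤ N} ⊆ {x : List α | x.length ≤ N + 1} :=
    fun _ hx => Nat.le_succ_of_le hx
  have hssub : {x : List α | x.length ≤ N} ⊂ {x : List α | x.length ≤ N + 1} :=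
    (Set.ssubset_iff_of_subset hsub).2
      ⟨List.replicate (N + 1) (Classical.arbitrary α), by simp, by simp⟩
  exact (Set.ncard_lt_ncard hssub (List.finite_length_le α (N + 1))).not_ge
    (Set.ncard_le_ncard_of_injOn ψ hmaps hψ.injOn (List.finite_length_le α N))

theorem cplx_le_length {ζ : List Bool →. List Bool} {p x : List Bool} (h : ζ p = Part.some x) :
    Cplx ζ x ≤ p.length :=
  sInf_le ⟨p, h, rfl⟩

def decodeList (k : ℕ) : List Bool := (Encodable.decode k).getD []

theorem decodeList_encode (x : List Bool) : decodeList (Encodable.encode x) = x := by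
  simp [decodeList]

theorem computable_decodeList : Computable decodeList :=
  Computable.option_getD Computable.decode (Computable.const [])

def searchMachine (q : List Bool → List Bool → Bool) : List Bool →. List Bool :=
  fun p => (Nat.rfind (fun k => q p (decodeList k) : ℕ →. Bool)).map decodeList

theorem partrec_searchMachine {q : List Bool → List Bool → Bool} (hq : Computable₂ q) :
    Partrec (searchMachine q) := by
  have hdecode : Computable fun a : List Bool × ℕ => decodeList a.2 :=
    computable_decodeList.comp Computable.snd
  exact (Partrec.rfind (hq.comp Computable.fst hdecode).to₂.partrec₂).map hdecode.to₂

theorem searchMachine_eq_some {q : List Bool → List Bool → Bool} {p y : List Bool}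
    (hy : q p y) : ∃ x, searchMachine q p = Part.some x ∧ q p x := by
  obtain ⟨k, hk, -⟩ := Nat.rfind_min' (p := fun k => q p (decodeList k))
    (m := Encodable.encode y) (by simpa [decodeList_encode] using hy)
  refine ⟨decodeList k, Part.eq_some_iff.2 (Part.mem_map _ hk), ?_⟩
  simpa using Nat.rfind_spec hk

theorem OptimalMachine.exists_cplx_le {ζ₀ : List Bool →. List Bool}
    (hζ₀ : OptimalMachine ζ₀) {good : List Bool → Bool} (hgood : Computable good)
    {f : List Bool → ℕ} (hf : Computable f)
    (hunbdd : ∀ n, ∃ x, good x ∧ n ≤ f x) : ∃ x, good x ∧ Cplx ζ₀ x ≤ f x := by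
  set q : List Bool → List Bool → Bool := fun p x => good x && decide (2 * p.length ≤ f x)
  have hq : Computable₂ q :=
    (Primrec.dom_bool₂ (· && ·)).to_comp.comp₂ (hgood.comp Computable.snd)
      (Primrec.nat_le.decide.to_comp.comp₂
        ((Primrec.nat_mul.comp (Primrec.const 2) Primrec.list_length).to_comp.comp
          Computable.fst) (hf.comp Computable.snd))
  obtain ⟨c, hc⟩ := hζ₀.2 _ (partrec_searchMachine hq)
  obtain ⟨y, hgy, hfy⟩ := hunbdd (2 * c)
  obtain ⟨x, hx, hqx⟩ := searchMachine_eq_some (q := q) (p := List.replicate c true) (y := y)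
    (by simp [q, hgy, hfy])
  simp only [q, List.length_replicate, Bool.and_eq_true, decide_eq_true_eq] at hqx
  refine ⟨x, hqx.1, ?_⟩
  calc Cplx ζ₀ x ≤ Cplx (searchMachine q) x + c := hc x
    _ ≤ c + c := by grw [cplx_le_length hx, List.length_replicate]
    _ ≤ f x := by exact_mod_cast (two_mul c).symm.trans_le hqx.2

theorem compressor_misses_simple_string_general (ζ₀ : List Bool →. List Bool)
    (hζ₀ : OptimalMachine ζ₀)
    (ψ : List Bool → List Bool) (hψc : Computable ψ) (hψi : Function.Injective ψ)
    (γ : ℕ → ℕ) (hγc : Computable γ)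
    (hγtop : Filter.Tendsto γ Filter.atTop Filter.atTop) :
    ∃ x : List Bool, Cplx ζ₀ x ≤ (γ x.length : ℕ∞) ∧ x.length ≤ (ψ x).length := by
  have hgood : Computable fun x : List Bool => decide (x.length ≤ (ψ x).length) :=
    Primrec.nat_le.decide.to_comp.comp Computable.list_length
      (Computable.list_length.comp hψc)
  have hunbdd (n : ℕ) : ∃ x, decide (x.length ≤ (ψ x).length) ∧ n ≤ γ x.length := by
    obtain ⟨M, hM⟩ := Filter.tendsto_atTop_atTop.1 hγtop n
    obtain ⟨x, hMx, hx⟩ := hψi.exists_le_length_le_length_apply M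
    exact ⟨x, decide_eq_true hx, hM _ hMx⟩
  obtain ⟨x, hx, hC⟩ := hζ₀.exists_cplx_le hgood (hγc.comp Computable.list_length) hunbdd
  exact ⟨x, hC, of_decide_eq_true hx⟩

/-- For every data compressor `ψ` (a total recursive injection on binary strings) and every
total recursive `γ : ℕ → ℕ` that is monotone and tends to infinity, there is a binary string
`x` with `C(x) ≤ γ(|x|)` which `ψ` does not compress (`|ψ(x)| ≥ |x|`). -/
theorem compressor_misses_simple_string (ζ₀ : List Bool →. List Bool)
    (hζ₀ : OptimalMachine ζ₀)
    (ψ : List Bool → List Bool) (hψc : Computable ψ) (hψi : Function.Injective ψ)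
    (γ : ℕ → ℕ) (hγc : Computable γ) (hγm : Monotone γ)
    (hγtop : Filter.Tendsto γ Filter.atTop Filter.atTop) :
    ∃ x : List Bool, Cplx ζ₀ x ≤ (γ x.length : ℕ∞) ∧ x.length ≤ (ψ x).length :=
  compressor_misses_simple_string_general ζ₀ hζ₀ ψ hψc hψi γ hγc hγtop
end
end

section
/- There exists a predictor φ (not necessarily computable) such that for every k ∈ ℕ and all ε, δ > 0, the uniform sample complexity 𝒩_φ(k, δ, ε) := sup{ N(φ, η, δ, ε) : η a labelling function with l(η) ≤ k } is finite. -/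
open scoped Classical

noncomputable section

/-
The memorization predictor, which answers a query by looking it up among the labelled examples,
works. It can only err on strings absent from the sample, and the expected `P`-mass of those is
`∑ₓ P x (1 - P x)ⁿ ≤ 2ᵗ / (n + 1)` since `(n + 1) p (1 - p)ⁿ ≤ 1`; by Markov's inequality
`δ_n ≤ 2ᵗ / ((n + 1) ε)`, so `N(φ, η, δ, ε) ≤ ⌈2ᵗ / (ε δ)⌉`. Finally, `l(η) ≤ k` leaves fewer
than `2ᵏ` minimal indices, each fixing `η` and hence `t(η)`, so `t(η)` is bounded.
-/

def memorize : Predictor := fun samples x =>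
  ((samples.find? fun p => decide (p.1 = x)).map Prod.snd).getD false

lemma memorize_labelled_of_mem (η : LabellingFunction) {n : ℕ} (xs : Fin n → List Bool)
    {x : List Bool} (hx : ∃ i, xs i = x) :
    memorize (List.ofFn fun i => (xs i, η.eval (xs i))) x = η.eval x := by
  obtain ⟨i, rfl⟩ := hx
  have hmem : (xs i, η.eval (xs i)) ∈ List.ofFn fun j => (xs j, η.eval (xs j)) :=
    List.mem_ofFn.2 ⟨i, rfl⟩
  unfold memorize
  cases hf : (List.ofFn fun j => (xs j, η.eval (xs j))).find? fun p => decide (p.1 = xs i) with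
  | none => exact absurd (by simp) (List.find?_eq_none.1 hf _ hmem)
  | some p =>
    have hp : p.1 = xs i := by simpa using List.find?_some hf
    obtain ⟨j, rfl⟩ := List.mem_ofFn.1 (List.mem_of_find?_eq_some hf)
    simp_all

lemma card_strings (t : ℕ) : (strings t).card = 2 ^ t := by
  induction t with
  | zero => rfl
  | succ t ih =>
    rw [strings, Finset.card_union_of_disjoint,
      Finset.card_image_of_injective _ List.cons_injective,
      Finset.card_image_of_injective _ List.cons_injective, ih, pow_succ, mul_two]
    simp [Finset.disjoint_left]

lemma FinDist.le_one {t : ℕ} (P : FinDist t) {x : List Bool} (hx : x ∈ strings t) : P.p x ≤ 1 :=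
  P.sum_one ▸ Finset.single_le_sum (fun y _ => P.nonneg y) hx

lemma FinDist.sum_erase {t : ℕ} (P : FinDist t) {x : List Bool} (hx : x ∈ strings t) :
    ∑ y ∈ (strings t).erase x, P.p y = 1 - P.p x := by
  rw [← P.sum_one, ← Finset.sum_erase_add _ _ hx, add_sub_cancel_right]

lemma FinDist.pr_mono {t : ℕ} (P : FinDist t) {S T : List Bool → Prop} (h : ∀ x, S x → T x) :
    P.pr S ≤ P.pr T :=
  Finset.sum_le_sum_of_subset_of_nonneg (Finset.monotone_filter_right _ fun x _ => h x)
    fun x _ _ => P.nonneg x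

lemma succ_mul_mul_one_sub_pow_le_one {p : ℝ} (h0 : 0 ≤ p) (h1 : p ≤ 1) (n : ℕ) :
    ((n : ℝ) + 1) * (p * (1 - p) ^ n) ≤ 1 := by
  have hq0 : 0 ≤ 1 - p := by linarith
  -- `p ∑_{i ≤ n} (1 - p)ⁱ = 1 - (1 - p)ⁿ⁺¹`, and each summand is at least `(1 - p)ⁿ`.
  have hgeom : p * ∑ i ∈ Finset.range (n + 1), (1 - p) ^ i = 1 - (1 - p) ^ (n + 1) := by
    linear_combination -(geom_sum_mul (1 - p) (n + 1))
  have hle : ((n : ℝ) + 1) * (1 - p) ^ n ≤ ∑ i ∈ Finset.range (n + 1), (1 - p) ^ i := by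
    simpa using Finset.card_nsmul_le_sum (Finset.range (n + 1)) _ _ fun i hi =>
      pow_le_pow_of_le_one hq0 (by linarith) (Nat.le_of_lt_succ (Finset.mem_range.1 hi))
  nlinarith [pow_nonneg hq0 (n + 1)]

/-- The expected weight of the points of `s` missed by an `n`-tuple drawn with weights `p`. -/
lemma sum_piFinset_sum_unseen_mul_prod {α R : Type*} [DecidableEq α] [CommSemiring R]
    (s : Finset α) (p : α → R) (n : ℕ) :
    ∑ xs ∈ Fintype.piFinset (fun _ : Fin n => s),
        (∑ x ∈ s.filter (fun x => ∀ i, xs i ≠ x), p x) * ∏ i, p (xs i) =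
      ∑ x ∈ s, p x * (∑ y ∈ s.erase x, p y) ^ n := by
  simp_rw [Finset.sum_filter, Finset.sum_mul]
  rw [Finset.sum_comm]
  refine Finset.sum_congr rfl fun x _ => ?_
  have hmiss : (Fintype.piFinset fun _ : Fin n => s).filter (fun xs => ∀ i, xs i ≠ x) =
      Fintype.piFinset fun _ => s.erase x := by
    ext xs
    simp only [Finset.mem_filter, Fintype.mem_piFinset, Finset.mem_erase]
    exact ⟨fun h i => ⟨h.2 i, h.1 i⟩, fun h => ⟨fun i => (h i).2, fun i => (h i).1⟩⟩
  simp_rw [ite_mul, zero_mul, ← Finset.sum_filter, hmiss, ← Finset.mul_sum,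
    ← Finset.prod_univ_sum, Finset.prod_const, Finset.card_univ, Fintype.card_fin]

lemma succ_mul_expected_unseen_le {t : ℕ} (P : FinDist t) (n : ℕ) :
    ((n : ℝ) + 1) * ∑ xs ∈ Fintype.piFinset (fun _ : Fin n => strings t),
        (P.pr fun x => ∀ i, xs i ≠ x) * ∏ i, P.p (xs i) ≤ 2 ^ t := by
  have hunseen : ∑ xs ∈ Fintype.piFinset (fun _ : Fin n => strings t),
      (P.pr fun x => ∀ i, xs i ≠ x) * ∏ i, P.p (xs i) =
        ∑ x ∈ strings t, P.p x * (∑ y ∈ (strings t).erase x, P.p y) ^ n := by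
    convert sum_piFinset_sum_unseen_mul_prod (strings t) P.p n using 3
    exact Finset.sum_congr (Finset.filter_congr_decidable _ _ _) fun _ _ => rfl
  rw [hunseen, Finset.mul_sum]
  calc ∑ x ∈ strings t, ((n : ℝ) + 1) * (P.p x * (∑ y ∈ (strings t).erase x, P.p y) ^ n)
      ≤ ∑ _x ∈ strings t, (1 : ℝ) := Finset.sum_le_sum fun x hx => by
        rw [P.sum_erase hx]
        exact succ_mul_mul_one_sub_pow_le_one (P.nonneg x) (P.le_one hx) n
    _ = 2 ^ t := by simp [card_strings]

lemma delta_memorize_le (η : LabellingFunction) {ε δ : ℝ} (hε : 0 < ε) (hδ : 0 < δ) {n : ℕ}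
    (hn : (2 : ℝ) ^ η.t ≤ ((n : ℝ) + 1) * ε * δ) : delta memorize η ε n ≤ δ := by
  refine Real.sSup_le ?_ hδ.le
  rintro _ ⟨P, rfl⟩
  set samples := Fintype.piFinset fun _ : Fin n => strings η.t
  have hprod (xs : Fin n → List Bool) : 0 ≤ ∏ i, P.p (xs i) :=
    Finset.prod_nonneg fun i _ => P.nonneg _
  -- Markov's inequality for the mass of the unseen strings, which bounds the error mass.
  have markov : ε * ∑ xs ∈ samples.filter (fun xs => ε < P.pr fun x =>
        memorize (List.ofFn fun i => (xs i, η.eval (xs i))) x ≠ η.eval x), ∏ i, P.p (xs i) ≤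
      ∑ xs ∈ samples, (P.pr fun x => ∀ i, xs i ≠ x) * ∏ i, P.p (xs i) := by
    rw [Finset.mul_sum]
    refine (Finset.sum_le_sum fun xs hxs => mul_le_mul_of_nonneg_right ?_ (hprod xs)).trans
      (Finset.sum_le_sum_of_subset_of_nonneg (Finset.filter_subset _ _) fun xs _ _ =>
        mul_nonneg (Finset.sum_nonneg fun x _ => P.nonneg x) (hprod xs))
    refine (Finset.mem_filter.1 hxs).2.le.trans (P.pr_mono fun x hx i hi => ?_)
    exact hx (memorize_labelled_of_mem η xs ⟨i, hi⟩)
  have hn1 : (0 : ℝ) < (n : ℝ) + 1 := by positivity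
  refine le_of_mul_le_mul_left ?_ (mul_pos hn1 hε)
  calc (n + 1) * ε * _ ≤ ((n : ℝ) + 1) * ∑ xs ∈ samples,
        (P.pr fun x => ∀ i, xs i ≠ x) * ∏ i, P.p (xs i) := by
        rw [mul_assoc]; exact mul_le_mul_of_nonneg_left markov hn1.le
    _ ≤ 2 ^ η.t := succ_mul_expected_unseen_le P n
    _ ≤ _ := hn

lemma sampleComplexity_memorize_le (η : LabellingFunction) {ε δ : ℝ} (hε : 0 < ε) (hδ : 0 < δ)
    {T : ℕ} (hT : η.t ≤ T) :
    sampleComplexity memorize η δ ε ≤ (⌈(2 : ℝ) ^ T / (ε * δ)⌉₊ : ℕ) := by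
  refine sInf_le ⟨_, rfl, delta_memorize_le η hε hδ ?_⟩
  have hceil := Nat.le_ceil ((2 : ℝ) ^ T / (ε * δ))
  rw [div_le_iff₀ (mul_pos hε hδ)] at hceil
  calc (2 : ℝ) ^ η.t ≤ 2 ^ T := pow_le_pow_right₀ one_le_two hT
    _ ≤ _ := hceil
    _ ≤ _ := by nlinarith [mul_pos hε hδ]

lemma Computes.unique {c : Nat.Partrec.Code} {f g : List Bool →. Bool}
    (hf : Computes c f) (hg : Computes c g) : f = g := by
  funext x
  have h := (hf x).symm.trans (hg x)
  apply Part.ext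
  intro b
  simpa [Encodable.encode_injective.eq_iff] using congrArg (Encodable.encode b ∈ ·) h

lemma LabellingFunction.exists_computes (η : LabellingFunction) :
    ∃ c : Nat.Partrec.Code, Computes c η.f := by
  obtain ⟨c, hc⟩ := Nat.Partrec.Code.exists_code.1 η.partrec
  exact ⟨c, fun x => by simp [hc, Encodable.encodek]⟩

lemma LabellingFunction.t_eq_of_f_eq {η η' : LabellingFunction} (h : η.f = η'.f) : η.t = η'.t := by
  have hdom : (η'.f (List.replicate η.t false)).Dom := h ▸ (η.dom _).2 (List.length_replicate ..)
  simpa using (η'.dom _).1 hdom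

lemma LabellingFunction.exists_computes_lt_of_ell_le {η : LabellingFunction} {k : ℕ}
    (hη : ell η ≤ k) : ∃ m < 2 ^ k, Computes (Denumerable.ofNat Nat.Partrec.Code m) η.f := by
  obtain ⟨c, hc⟩ := η.exists_computes
  have hne : {m : ℕ | Computes (Denumerable.ofNat Nat.Partrec.Code m) η.f}.Nonempty :=
    ⟨Encodable.encode c, by rwa [Set.mem_ofPred_eq, Denumerable.ofNat_encode]⟩
  exact ⟨_, Nat.size_le.1 hη, Nat.sInf_mem hne⟩

lemma LabellingFunction.bddAbove_t_of_ell_le (k : ℕ) :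
    BddAbove {t | ∃ η : LabellingFunction, ell η ≤ k ∧ η.t = t} := by
  refine Set.Finite.bddAbove <| ((Set.finite_lt_nat (2 ^ k)).biUnion fun m _ =>
    Set.Subsingleton.finite (s := {t | ∃ η : LabellingFunction,
      Computes (Denumerable.ofNat Nat.Partrec.Code m) η.f ∧ η.t = t}) ?_).subset ?_
  · rintro _ ⟨η, hη, rfl⟩ _ ⟨η', hη', rfl⟩
    exact t_eq_of_f_eq (hη.unique hη')
  · rintro _ ⟨η, hη, rfl⟩
    obtain ⟨m, hm, hc⟩ := exists_computes_lt_of_ell_le hη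
    exact Set.mem_biUnion hm ⟨η, hc, rfl⟩

/-- There exists a (not necessarily computable) predictor `φ` whose uniform sample complexity
`𝒩_φ(k,δ,ε) = sup{ N(φ,η,δ,ε) : η a labelling function with l(η) ≤ k }` is finite
for every `k` and all `ε, δ > 0`. -/
theorem exists_predictor_uniform_sample_complexity_finite :
    ∃ φ : Predictor, ∀ k : ℕ, ∀ ε δ : ℝ, 0 < ε → 0 < δ →
      sSup {N : ℕ∞ | ∃ η : LabellingFunction, ell η ≤ k ∧ N = sampleComplexity φ η δ ε}
        < ⊤ := by
  refine ⟨memorize, fun k ε δ hε hδ => ?_⟩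
  obtain ⟨T, hT⟩ := LabellingFunction.bddAbove_t_of_ell_le k
  refine (sSup_le ?_).trans_lt (WithTop.coe_lt_top (⌈(2 : ℝ) ^ T / (ε * δ)⌉₊ : ℕ))
  rintro _ ⟨η, hη, rfl⟩
  exact sampleComplexity_memorize_le η hε hδ (hT ⟨η, hη, rfl⟩)
end
end

section
/- There exists a family of maps φ = (φ_n), where φ_n assigns to each tuple (x_1,y_1,…,x_n,y_n,x) with x_1,…,x_n,x ∈ {0,1}^ℕ and y_1,…,y_n ∈ {0,1} a label φ_n(x_1,y_1,…,x_n,y_n,x) ∈ {0,1}, with the following property: for every m ∈ ℕ and all ε, δ > 0 there exists N ∈ ℕ such that for every function η : {0,1}^ℕ → {0,1} that depends only on the first m coordinates (i.e. η(x) = η(x') whenever x_i = x'_i for all i < m), every Borel probability measure P on the Cantor space {0,1}^ℕ, and every n ≥ N: P^n{ (x_1,…,x_n) : P{ x : φ_n(x_1,η(x_1),…,x_n,η(x_n),x) ≠ η(x) } > ε } ≤ δ, where P^n denotes the n-fold product measure (i.i.d. sampling). Such a φ is given by the nearest-neighbour rule that predicts the label y_k of a sample point x_k having the longest common prefix with x.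 -/
open MeasureTheory
open scoped ENNReal

noncomputable def nnScore (n : ℕ) (a x : ℕ → Bool) : ℕ :=
  (Finset.range (n+1)).sup (fun l => if ∀ j < l, a j = x j then l else 0)

noncomputable def nnPhi (n : ℕ) (xs : Fin n → (ℕ → Bool)) (ys : Fin n → Bool)
    (x : ℕ → Bool) : Bool :=
  if h : ∃ i : Fin n, ∀ i' : Fin n, nnScore n (xs i') x ≤ nnScore n (xs i) x then
    ys h.choose else false

lemma nnScore_ge {n m : ℕ} (hmn : m ≤ n) {a x : ℕ → Bool} (h : ∀ j < m, a j = x j) :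
    m ≤ nnScore n a x := by
  have hmem : m ∈ Finset.range (n+1) := Finset.mem_range.2 (by omega)
  have h2 := Finset.le_sup (f := fun l => if ∀ j < l, a j = x j then l else 0) hmem
  simp only [if_pos h] at h2
  exact h2

lemma nnScore_agree {n m : ℕ} {a x : ℕ → Bool} (hm : m ≤ nnScore n a x) :
    ∀ j < m, a j = x j := by
  rcases Nat.eq_zero_or_pos m with rfl | hm0
  · omega
  · rw [nnScore, Finset.le_sup_iff (by omega : (0:ℕ) < m)] at hm
    obtain ⟨l, -, hl⟩ := hm
    by_cases hagree : ∀ j < l, a j = x j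
    · have hml : m ≤ l := by simpa [if_pos hagree] using hl
      exact fun j hj => hagree j (by omega)
    · have : m ≤ 0 := by simpa [if_neg hagree] using hl
      omega

lemma nnPhi_correct {n m : ℕ} (hmn : m ≤ n) (hn : 0 < n) (xs : Fin n → (ℕ → Bool))
    (η : (ℕ → Bool) → Bool) (hη : ∀ x x' : ℕ → Bool, (∀ i < m, x i = x' i) → η x = η x')
    (x : ℕ → Bool) (i : Fin n) (hi : ∀ j < m, xs i j = x j) :
    nnPhi n xs (fun i => η (xs i)) x = η x := by
  have : Nonempty (Fin n) := ⟨⟨0, hn⟩⟩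
  have h : ∃ i0 : Fin n, ∀ i' : Fin n, nnScore n (xs i') x ≤ nnScore n (xs i0) x :=
    Finite.exists_max _
  rw [nnPhi, dif_pos h]
  have hsc : m ≤ nnScore n (xs h.choose) x :=
    le_trans (nnScore_ge hmn hi) (h.choose_spec i)
  exact hη _ _ (nnScore_agree hsc)

lemma geom_id (a : ℝ≥0∞) (ha : a ≤ 1) : ∀ n : ℕ,
    (∑ k ∈ Finset.range n, a * (1-a)^k) + (1-a)^n = 1 := by
  intro n
  induction n with
  | zero => simp
  | succ n ih =>
    rw [Finset.sum_range_succ]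
    calc (∑ k ∈ Finset.range n, a * (1-a)^k) + a * (1-a)^n + (1-a)^(n+1)
        = (∑ k ∈ Finset.range n, a * (1-a)^k) + (1-a)^n * (a + (1-a)) := by ring
      _ = 1 := by rw [add_tsub_cancel_of_le ha, mul_one, ih]

lemma geom_bound (a : ℝ≥0∞) (ha : a ≤ 1) (n : ℕ) :
    (n+1 : ℝ≥0∞) * (a * (1-a)^n) ≤ 1 := by
  have h1 : (n+1 : ℝ≥0∞) * (a * (1-a)^n) ≤ ∑ k ∈ Finset.range (n+1), a * (1-a)^k := by
    have : (n+1 : ℝ≥0∞) * (a * (1-a)^n) = ∑ _k ∈ Finset.range (n+1), a * (1-a)^n := by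
      rw [Finset.sum_const, Finset.card_range, nsmul_eq_mul]
      push_cast
      ring
    rw [this]
    refine Finset.sum_le_sum fun k hk => mul_le_mul_right ?_ a
    exact pow_le_pow_right_of_le_one' tsub_le_self
      (by simpa using Nat.lt_succ_iff.1 (Finset.mem_range.1 hk))
  calc (n+1 : ℝ≥0∞) * (a * (1-a)^n) ≤ ∑ k ∈ Finset.range (n+1), a * (1-a)^k := h1
    _ ≤ 1 := le_of_add_le_left (geom_id a ha (n+1)).le

/-- There is a family of predictors `φ = (φ_n)` on the Cantor space `{0,1}^ℕ` (given by the
nearest-neighbour rule) such that for every `m` and all `ε, δ > 0` there is a sample size `N`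
such that for every labelling function `η` depending only on the first `m` coordinates, every
Borel probability measure `P` on `{0,1}^ℕ` and every `n ≥ N`, the `P^n`-probability
(i.i.d. sampling) that the `P`-probability of error of `φ_n` exceeds `ε` is at most `δ`. -/
theorem exists_nearest_neighbour_predictor_uniform_bound :
    ∃ φ : (n : ℕ) → (Fin n → (ℕ → Bool)) → (Fin n → Bool) → (ℕ → Bool) → Bool,
      ∀ m : ℕ, ∀ ε δ : ℝ, 0 < ε → 0 < δ →
        ∃ N : ℕ, ∀ η : (ℕ → Bool) → Bool,
          (∀ x x' : ℕ → Bool, (∀ i < m, x i = x' i) → η x = η x') →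
          ∀ P : Measure (ℕ → Bool), IsProbabilityMeasure P →
          ∀ n : ℕ, N ≤ n →
            Measure.pi (fun _ : Fin n => P)
                {xs | ENNReal.ofReal ε < P {x | φ n xs (fun i => η (xs i)) x ≠ η x}}
              ≤ ENNReal.ofReal δ := by
  refine ⟨nnPhi, fun m ε δ hε hδ => ?_⟩
  refine ⟨max (m + 1) (⌈(2:ℝ)^m / (ε*δ)⌉₊ + 1), fun η hη P hP n hn => ?_⟩
  have hmn : m ≤ n := by
    have := le_trans (le_max_left (m+1) _) hn; omega
  have hn0 : 0 < n := by omega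
  have hnbig : (2:ℝ)^m / (ε*δ) ≤ n := by
    have h1 : ⌈(2:ℝ)^m / (ε*δ)⌉₊ + 1 ≤ n := le_trans (le_max_right _ _) hn
    calc (2:ℝ)^m / (ε*δ) ≤ (⌈(2:ℝ)^m / (ε*δ)⌉₊ : ℝ) := Nat.le_ceil _
      _ ≤ n := by exact_mod_cast Nat.le_of_succ_le h1
  set μ := Measure.pi (fun _ : Fin n => P) with hμ
  have : IsProbabilityMeasure μ := by rw [hμ]; infer_instance
  -- the finite-cylinder projection
  set c : (ℕ → Bool) → (Fin m → Bool) := fun x j => x (j : ℕ) with hc_def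
  have hc : Measurable c := measurable_pi_lambda _ (fun j => measurable_pi_apply _)
  set f : (Fin n → ℕ → Bool) → ℝ≥0∞ := fun xs => P {x | ∀ i : Fin n, c (xs i) ≠ c x}
    with hf_def
  -- step A : the error event is contained in the "miss" event
  have hsubset : {xs | ENNReal.ofReal ε < P {x | nnPhi n xs (fun i => η (xs i)) x ≠ η x}}
      ⊆ {xs | ENNReal.ofReal ε ≤ f xs} := by
    intro xs hxs
    have herr : {x | nnPhi n xs (fun i => η (xs i)) x ≠ η x}
        ⊆ {x | ∀ i : Fin n, c (xs i) ≠ c x} := by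
      intro x hx
      by_contra hcon
      simp only [Set.mem_setOf_eq, not_forall, not_not] at hcon
      obtain ⟨i, hi⟩ := hcon
      have hagree : ∀ j < m, xs i j = x j := by
        intro j hj
        have := congrFun hi ⟨j, hj⟩
        simpa [hc_def] using this
      exact hx (nnPhi_correct hmn hn0 xs η hη x i hagree)
    exact le_trans (le_of_lt hxs) (measure_mono herr)
  -- step B : measurability of f
  have hf : Measurable f := by
    have hG : Measurable (fun xs : Fin n → ℕ → Bool => fun i => c (xs i)) :=
      measurable_pi_lambda _ (fun i => hc.comp (measurable_pi_apply i))
    have hF : Measurable (fun v : Fin n → Fin m → Bool => P {x | ∀ i : Fin n, v i ≠ c x}) :=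
      measurable_of_countable _
    exact hF.comp hG
  -- step C : Markov
  have hmarkov : μ {xs | ENNReal.ofReal ε ≤ f xs} ≤ (∫⁻ xs, f xs ∂μ) / ENNReal.ofReal ε :=
    meas_ge_le_lintegral_div hf.aemeasurable
      (by simpa using (ENNReal.ofReal_pos.2 hε).ne') ENNReal.ofReal_ne_top
  -- step D : the expected miss mass
  set g : (Fin m → Bool) → ℝ≥0∞ := fun w => P (c ⁻¹' {w}) with hg_def
  have hmeasA : ∀ w : Fin m → Bool, MeasurableSet {ys : Fin n → ℕ → Bool | ∀ i, c (ys i) ≠ w} := by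
    intro w
    have : {ys : Fin n → ℕ → Bool | ∀ i, c (ys i) ≠ w}
        = ⋂ i : Fin n, (fun ys : Fin n → ℕ → Bool => c (ys i)) ⁻¹' {w}ᶜ := by
      ext ys; simp [Set.mem_iInter]
    rw [this]
    exact MeasurableSet.iInter fun i =>
      (hc.comp (measurable_pi_apply i)) (measurableSet_singleton w).compl
  have hpointwise : ∀ xs, f xs ≤ ∑ w : Fin m → Bool,
      Set.indicator {ys | ∀ i, c (ys i) ≠ w} (fun _ => g w) xs := by
    intro xs
    have hsub : {x | ∀ i : Fin n, c (xs i) ≠ c x}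
        ⊆ ⋃ w ∈ Finset.univ.filter (fun w : Fin m → Bool => ∀ i, c (xs i) ≠ w),
            c ⁻¹' {w} := by
      intro x hx
      exact Set.mem_biUnion (Finset.mem_filter.2 ⟨Finset.mem_univ _, hx⟩) rfl
    calc f xs ≤ ∑ w ∈ Finset.univ.filter (fun w : Fin m → Bool => ∀ i, c (xs i) ≠ w), g w :=
          le_trans (measure_mono hsub) (measure_biUnion_finset_le _ _)
      _ = ∑ w : Fin m → Bool, Set.indicator {ys | ∀ i, c (ys i) ≠ w} (fun _ => g w) xs := by
          rw [Finset.sum_filter]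
          refine Finset.sum_congr rfl fun w _ => ?_
          by_cases hw : ∀ i, c (xs i) ≠ w
          · rw [if_pos hw,
              Set.indicator_of_mem (show xs ∈ {ys | ∀ i, c (ys i) ≠ w} from hw)]
          · rw [if_neg hw,
              Set.indicator_of_notMem (show xs ∉ {ys | ∀ i, c (ys i) ≠ w} from hw)]
  have hint : (∫⁻ xs, f xs ∂μ) ≤ (2:ℝ≥0∞)^m * ((n:ℝ≥0∞)+1)⁻¹ := by
    have h1 : (∫⁻ xs, f xs ∂μ) ≤ ∫⁻ xs, ∑ w : Fin m → Bool,
        Set.indicator {ys | ∀ i, c (ys i) ≠ w} (fun _ => g w) xs ∂μ :=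
      lintegral_mono hpointwise
    have h2 : (∫⁻ xs, ∑ w : Fin m → Bool,
        Set.indicator {ys | ∀ i, c (ys i) ≠ w} (fun _ => g w) xs ∂μ)
        = ∑ w : Fin m → Bool, g w * μ {ys | ∀ i, c (ys i) ≠ w} := by
      rw [lintegral_finset_sum]
      · refine Finset.sum_congr rfl fun w _ => ?_
        rw [lintegral_indicator (hmeasA w)]
        simp [lintegral_const, Measure.restrict_apply MeasurableSet.univ]
      · exact fun w _ => (measurable_const.indicator (hmeasA w))
    have h3 : ∀ w : Fin m → Bool, μ {ys : Fin n → ℕ → Bool | ∀ i, c (ys i) ≠ w}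
        = (1 - g w)^n := by
      intro w
      have hset : {ys : Fin n → ℕ → Bool | ∀ i, c (ys i) ≠ w}
          = Set.pi Set.univ (fun _ : Fin n => {x : ℕ → Bool | c x ≠ w}) := by
        ext ys; simp [Set.mem_pi]
      have hcompl : P {x : ℕ → Bool | c x ≠ w} = 1 - g w := by
        have : {x : ℕ → Bool | c x ≠ w} = (c ⁻¹' {w})ᶜ := by ext x; simp
        rw [this, measure_compl (hc (measurableSet_singleton w)) (measure_ne_top P _),
          measure_univ]
      rw [hset, hμ, Measure.pi_pi]
      simp [hcompl]
    have h4 : ∀ w : Fin m → Bool, g w * (1 - g w)^n ≤ ((n:ℝ≥0∞)+1)⁻¹ := by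
      intro w
      have hg1 : g w ≤ 1 := prob_le_one
      have := geom_bound (g w) hg1 n
      rw [ENNReal.le_inv_iff_mul_le]
      calc g w * (1 - g w)^n * ((n:ℝ≥0∞)+1) = ((n:ℝ≥0∞)+1) * (g w * (1-g w)^n) := by ring
        _ ≤ 1 := this
    calc (∫⁻ xs, f xs ∂μ) ≤ ∑ w : Fin m → Bool, g w * μ {ys | ∀ i, c (ys i) ≠ w} :=
          h1.trans_eq h2
      _ = ∑ w : Fin m → Bool, g w * (1 - g w)^n := by
          refine Finset.sum_congr rfl fun w _ => by rw [h3 w]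
      _ ≤ ∑ _w : Fin m → Bool, ((n:ℝ≥0∞)+1)⁻¹ := Finset.sum_le_sum fun w _ => h4 w
      _ = (2:ℝ≥0∞)^m * ((n:ℝ≥0∞)+1)⁻¹ := by
          rw [Finset.sum_const, Finset.card_univ, nsmul_eq_mul]
          norm_num [Fintype.card_fun]
  -- step E : arithmetic
  have harith : (2:ℝ≥0∞)^m * ((n:ℝ≥0∞)+1)⁻¹ / ENNReal.ofReal ε ≤ ENNReal.ofReal δ := by
    rw [ENNReal.div_le_iff (by simpa using (ENNReal.ofReal_pos.2 hε).ne') ENNReal.ofReal_ne_top]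
    have hreal : (2:ℝ)^m ≤ ((n:ℝ)+1) * (δ * ε) := by
      have hεδ : 0 < ε * δ := mul_pos hε hδ
      have := (div_le_iff₀ hεδ).1 hnbig
      nlinarith [pow_pos (by norm_num : (0:ℝ) < 2) m]
    have hEN : (2:ℝ≥0∞)^m ≤ ((n:ℝ≥0∞)+1) * (ENNReal.ofReal δ * ENNReal.ofReal ε) := by
      have := ENNReal.ofReal_le_ofReal hreal
      rw [ENNReal.ofReal_mul (by positivity), ENNReal.ofReal_mul hδ.le] at this
      calc (2:ℝ≥0∞)^m = ENNReal.ofReal ((2:ℝ)^m) := by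
            rw [ENNReal.ofReal_pow (by norm_num)]; norm_num
        _ ≤ _ := by
            refine this.trans_eq ?_
            congr 1
            rw [ENNReal.ofReal_add (by positivity) (by norm_num)]
            simp [ENNReal.ofReal_natCast]
    calc (2:ℝ≥0∞)^m * ((n:ℝ≥0∞)+1)⁻¹
        ≤ ((n:ℝ≥0∞)+1) * (ENNReal.ofReal δ * ENNReal.ofReal ε) * ((n:ℝ≥0∞)+1)⁻¹ :=
          mul_le_mul_left hEN _
      _ = (ENNReal.ofReal δ * ENNReal.ofReal ε) * (((n:ℝ≥0∞)+1) * ((n:ℝ≥0∞)+1)⁻¹) := by ring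
      _ = ENNReal.ofReal δ * ENNReal.ofReal ε := by
          rw [ENNReal.mul_inv_cancel (by simp) (by simp), mul_one]
  calc μ {xs | ENNReal.ofReal ε < P {x | nnPhi n xs (fun i => η (xs i)) x ≠ η x}}
      ≤ μ {xs | ENNReal.ofReal ε ≤ f xs} := measure_mono hsubset
    _ ≤ (∫⁻ xs, f xs ∂μ) / ENNReal.ofReal ε := hmarkov
    _ ≤ (2:ℝ≥0∞)^m * ((n:ℝ≥0∞)+1)⁻¹ / ENNReal.ofReal ε :=
        ENNReal.div_le_div_right hint _
    _ ≤ ENNReal.ofReal δ := harith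
end
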